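/- arXiv:1407.8246 — 2 statements merged into one kernel-verified Lean document; each statement's English description precedes it below -/
import Mathlib

section
/- Let x, x' ∈ ℝⁿ with ‖x‖₂ ≤ 1 and ‖x'‖₂ ≤ 1, and let [x,1], [x',1] ∈ ℝ^{n+1} denote the concatenations of x and x' with the scalar 1. Then ‖x − x'‖₂ ≤ 2 ‖ [x,1]/‖[x,1]‖₂ − [x',1]/‖[x',1]‖₂ ‖₂. In particular, if the normalized augmented vectors are within δ/8 of each other in Euclidean norm, then ‖x − x'‖₂ ≤ δ/4. -/
/-!
Only the Gram data matter: `⟪[x,1], [y,1]⟫ = ⟪x, y⟫ + 1`. Writing `a = ‖[x,1]‖`, `b = ‖[y,1]‖`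
and `t = ⟪x, y⟫`, the scaled chord `a b ‖[x,1]/a - [y,1]/b‖ = ‖b [x,1] - a [y,1]‖` has square
`2a²b² - 2ab(t + 1)`, and `‖x - y‖² ≤ 2a²b² - 2ab(t + 1)` follows from
`2ab(t + 1) ≤ a²b² + (t + 1)²` together with Cauchy–Schwarz `t² ≤ ‖x‖²‖y‖²`.
On the unit ball `a, b ≤ √2`, which gives the factor `2`.
-/

/-- Concatenation of a vector `z ∈ ℝⁿ` with the scalar `1`, yielding `[z,1] ∈ ℝ^{n+1}`. -/
noncomputable def aug {n : ℕ} (z : EuclideanSpace ℝ (Fin n)) : EuclideanSpace ℝ (Fin (n + 1)) :=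
  WithLp.toLp 2 (fun i => if h : (i : ℕ) < n then z ⟨i, h⟩ else 1)

open RealInnerProductSpace

section InnerAddOne

variable {E F : Type*} [NormedAddCommGroup E] [InnerProductSpace ℝ E]
  [NormedAddCommGroup F] [InnerProductSpace ℝ F] {f : E → F}

theorem norm_sq_of_inner_eq_inner_add_one (hf : ∀ x y, ⟪f x, f y⟫ = ⟪x, y⟫ + 1) (x : E) :
    ‖f x‖ ^ 2 = ‖x‖ ^ 2 + 1 := by
  rw [← real_inner_self_eq_norm_sq, hf, real_inner_self_eq_norm_sq]

theorem norm_pos_of_inner_eq_inner_add_one (hf : ∀ x y, ⟪f x, f y⟫ = ⟪x, y⟫ + 1) (x : E) :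
    0 < ‖f x‖ := by
  have h := norm_sq_of_inner_eq_inner_add_one hf x
  exact (norm_nonneg _).lt_of_ne' (sq_pos_iff.mp (by rw [h]; positivity))

theorem norm_sub_le_mul_norm_normalize_sub (hf : ∀ x y, ⟪f x, f y⟫ = ⟪x, y⟫ + 1) (x y : E) :
    ‖x - y‖ ≤ ‖f x‖ * ‖f y‖ * ‖‖f x‖⁻¹ • f x - ‖f y‖⁻¹ • f y‖ := by
  set a := ‖f x‖
  set b := ‖f y‖
  have ha : 0 < a := norm_pos_of_inner_eq_inner_add_one hf x
  have hb : 0 < b := norm_pos_of_inner_eq_inner_add_one hf y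
  have hscale : a * b * ‖a⁻¹ • f x - b⁻¹ • f y‖ = ‖b • f x - a • f y‖ := by
    rw [← abs_of_pos (mul_pos ha hb), ← Real.norm_eq_abs, ← norm_smul, smul_sub, smul_smul,
      smul_smul]
    congr 3 <;> field_simp
  have hchord : ‖b • f x - a • f y‖ ^ 2 = 2 * a ^ 2 * b ^ 2 - 2 * a * b * (⟪x, y⟫ + 1) := by
    rw [norm_sub_sq_real, norm_smul, norm_smul, real_inner_smul_left, real_inner_smul_right, hf,
      Real.norm_of_nonneg ha.le, Real.norm_of_nonneg hb.le]
    ring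
  have hCS : ⟪x, y⟫ ^ 2 ≤ ‖x‖ ^ 2 * ‖y‖ ^ 2 := by
    rw [← mul_pow, ← sq_abs]
    exact pow_le_pow_left₀ (abs_nonneg _) (abs_real_inner_le_norm x y) 2
  rw [hscale]
  refine (pow_le_pow_iff_left₀ (norm_nonneg _) (norm_nonneg _) two_ne_zero).mp ?_
  have ha2 : a ^ 2 = ‖x‖ ^ 2 + 1 := norm_sq_of_inner_eq_inner_add_one hf x
  have hb2 : b ^ 2 = ‖y‖ ^ 2 + 1 := norm_sq_of_inner_eq_inner_add_one hf y
  rw [hchord, norm_sub_sq_real]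
  nlinarith [sq_nonneg (a * b - ⟪x, y⟫ - 1)]

end InnerAddOne

theorem inner_aug {n : ℕ} (x y : EuclideanSpace ℝ (Fin n)) : ⟪aug x, aug y⟫ = ⟪x, y⟫ + 1 := by
  simp only [PiLp.inner_apply, RCLike.inner_apply, conj_trivial, aug]
  rw [Fin.sum_univ_castSucc]
  simp

theorem norm_aug_sq_le_two {n : ℕ} {x : EuclideanSpace ℝ (Fin n)} (hx : ‖x‖ ≤ 1) :
    ‖aug x‖ ^ 2 ≤ 2 := by
  rw [norm_sq_of_inner_eq_inner_add_one inner_aug]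
  nlinarith [norm_nonneg x]

theorem norm_aug_mul_norm_aug_le_two {n : ℕ} {x y : EuclideanSpace ℝ (Fin n)} (hx : ‖x‖ ≤ 1)
    (hy : ‖y‖ ≤ 1) : ‖aug x‖ * ‖aug y‖ ≤ 2 := by
  refine (pow_le_pow_iff_left₀ (by positivity) zero_le_two two_ne_zero).mp ?_
  calc (‖aug x‖ * ‖aug y‖) ^ 2 = ‖aug x‖ ^ 2 * ‖aug y‖ ^ 2 := mul_pow _ _ 2
    _ ≤ 2 * 2 :=
      mul_le_mul (norm_aug_sq_le_two hx) (norm_aug_sq_le_two hy) (by positivity) zero_le_two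
    _ = 2 ^ 2 := by norm_num

/-- For `x, x'` in the Euclidean unit ball of `ℝⁿ`,
`‖x − x'‖₂ ≤ 2 ‖[x,1]/‖[x,1]‖ − [x',1]/‖[x',1]‖‖₂`; in particular, if the
normalized augmented vectors are within `δ/8`, then `‖x − x'‖₂ ≤ δ/4`. -/
theorem stmt14 {n : ℕ} (x x' : EuclideanSpace ℝ (Fin n)) (hx : ‖x‖ ≤ 1) (hx' : ‖x'‖ ≤ 1) :
    ‖x - x'‖ ≤ 2 * ‖(‖aug x‖⁻¹ • aug x) - (‖aug x'‖⁻¹ • aug x')‖ ∧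
    ∀ δ : ℝ, ‖(‖aug x‖⁻¹ • aug x) - (‖aug x'‖⁻¹ • aug x')‖ ≤ δ / 8 →
      ‖x - x'‖ ≤ δ / 4 := by
  have h : ‖x - x'‖ ≤ 2 * ‖(‖aug x‖⁻¹ • aug x) - (‖aug x'‖⁻¹ • aug x')‖ :=
    (norm_sub_le_mul_norm_normalize_sub inner_aug x x').trans <|
      mul_le_mul_of_nonneg_right (norm_aug_mul_norm_aug_le_two hx hx') (norm_nonneg _)
  exact ⟨h, fun δ hδ => by linarith⟩
end

section
/- Let u, v ∈ ℝⁿ be orthonormal vectors, let R > 0, and let x♯ = α u with 0 ≤ α < 2R. Set w = 2R(u + v) and ξ = ⟨ (w − x♯)/‖w − x♯‖₂ , v ⟩. Then ξ ∈ (0,1] and α = 2R f(ξ), where f(ξ) = 1 − √(1 − ξ²)/ξ. Equivalently, writing cos θ = ξ for the angle θ between w − x♯ and v, one has ‖x♯‖₂ = 2R − 2R tan θ = 2R f(cos θ). -/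
open scoped RealInnerProductSpace

/-! The difference `w - x♯ = (2R - α) u + 2R v` has orthonormal coordinates `(2R - α, 2R)`, so
`ξ = 2R / √((2R - α)² + (2R)²)` is the cosine of its angle with `v`, and `√(1 - ξ²) / ξ` is the
tangent `(2R - α) / (2R)` of that angle. -/

namespace Real

theorem div_sqrt_sq_add_sq_le_one (a b : ℝ) : b / √(a ^ 2 + b ^ 2) ≤ 1 := by
  refine div_le_one_of_le₀ ?_ (sqrt_nonneg _)
  exact (le_abs_self b).trans (by rw [← sqrt_sq_eq_abs]; gcongr; nlinarith)

theorem sqrt_one_sub_sq_div_sqrt_sq_add_sq {a b : ℝ} (ha : 0 ≤ a) (hb : b ≠ 0) :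
    √(1 - (b / √(a ^ 2 + b ^ 2)) ^ 2) = a / √(a ^ 2 + b ^ 2) := by
  have hpos : 0 < a ^ 2 + b ^ 2 := by positivity
  have : 1 - (b / √(a ^ 2 + b ^ 2)) ^ 2 = (a / √(a ^ 2 + b ^ 2)) ^ 2 := by
    rw [div_pow, div_pow, sq_sqrt hpos.le]
    field_simp
    ring
  rw [this, sqrt_sq (by positivity)]

theorem sqrt_one_sub_sq_div_self_eq_div {a b : ℝ} (ha : 0 ≤ a) (hb : b ≠ 0) :
    √(1 - (b / √(a ^ 2 + b ^ 2)) ^ 2) / (b / √(a ^ 2 + b ^ 2)) = a / b := by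
  have : √(a ^ 2 + b ^ 2) ≠ 0 := by positivity
  rw [sqrt_one_sub_sq_div_sqrt_sq_add_sq ha hb, div_div_div_cancel_right₀ this]

end Real

section Orthonormal

variable {E : Type*} [NormedAddCommGroup E] [InnerProductSpace ℝ E] {u v : E}

theorem norm_smul_add_smul_of_orthonormal (hu : ‖u‖ = 1) (hv : ‖v‖ = 1) (huv : ⟪u, v⟫ = 0)
    (a b : ℝ) : ‖a • u + b • v‖ = √(a ^ 2 + b ^ 2) := by
  rw [← Real.sqrt_sq (norm_nonneg _), norm_add_sq_real, norm_smul, norm_smul,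
    real_inner_smul_left, real_inner_smul_right, huv, hu, hv, Real.norm_eq_abs, Real.norm_eq_abs]
  simp only [mul_one, sq_abs, mul_zero, add_zero]

theorem inner_smul_add_smul_left_of_orthonormal (hv : ‖v‖ = 1) (huv : ⟪u, v⟫ = 0) (a b : ℝ) :
    ⟪a • u + b • v, v⟫ = b := by
  rw [inner_add_left, real_inner_smul_left, real_inner_smul_left, huv, real_inner_self_eq_norm_sq,
    hv]
  ring

theorem inner_normalize_smul_add_smul_of_orthonormal (hu : ‖u‖ = 1) (hv : ‖v‖ = 1)
    (huv : ⟪u, v⟫ = 0) (a b : ℝ) :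
    ⟪‖a • u + b • v‖⁻¹ • (a • u + b • v), v⟫ = b / √(a ^ 2 + b ^ 2) := by
  rw [real_inner_smul_left, inner_smul_add_smul_left_of_orthonormal hv huv,
    norm_smul_add_smul_of_orthonormal hu hv huv, inv_mul_eq_div]

end Orthonormal

/-- Let `u, v` be orthonormal, `R > 0`, `x♯ = α u` with `0 ≤ α < 2R`,
`w = 2R(u+v)`, and `ξ = ⟨(w − x♯)/‖w − x♯‖, v⟩`. Then `ξ ∈ (0,1]` and
`α = 2R f(ξ)` with `f(ξ) = 1 − √(1 − ξ²)/ξ`; equivalently, with `cos θ = ξ`,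
`‖x♯‖₂ = 2R − 2R tan θ = 2R f(cos θ)`. -/
theorem stmt15 {n : ℕ} (u v : EuclideanSpace ℝ (Fin n)) (hu : ‖u‖ = 1) (hv : ‖v‖ = 1)
    (huv : ⟪u, v⟫ = 0) (R α : ℝ) (hR : 0 < R) (hα0 : 0 ≤ α) (hα2 : α < 2 * R)
    (xsharp w : EuclideanSpace ℝ (Fin n)) (hxs : xsharp = α • u)
    (hw : w = (2 * R) • (u + v))
    (ξ : ℝ) (hξ : ξ = ⟪(‖w - xsharp‖⁻¹) • (w - xsharp), v⟫) :
    0 < ξ ∧ ξ ≤ 1 ∧ α = 2 * R * (1 - Real.sqrt (1 - ξ ^ 2) / ξ) ∧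
      ‖xsharp‖ = 2 * R * (1 - Real.sqrt (1 - ξ ^ 2) / ξ) := by
  have hdiff : w - xsharp = (2 * R - α) • u + (2 * R) • v := by
    rw [hw, hxs]; module
  have hξ' : ξ = 2 * R / √((2 * R - α) ^ 2 + (2 * R) ^ 2) := by
    rw [hξ, hdiff, inner_normalize_smul_add_smul_of_orthonormal hu hv huv]
  have htan : √(1 - ξ ^ 2) / ξ = (2 * R - α) / (2 * R) := by
    rw [hξ']; exact Real.sqrt_one_sub_sq_div_self_eq_div (by linarith) (by positivity)
  have hα : α = 2 * R * (1 - √(1 - ξ ^ 2) / ξ) := by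
    rw [htan]; field_simp; ring
  refine ⟨by rw [hξ']; positivity, hξ' ▸ Real.div_sqrt_sq_add_sq_le_one _ _, hα, ?_⟩
  rw [hxs, norm_smul, hu, Real.norm_of_nonneg hα0, mul_one, ← hα]
end
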